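/- arXiv:2303.06444 — 14 statements merged into one kernel-verified Lean document; each statement's English description precedes it below -/
import Mathlib

section
/- Let (g,•) be a finite-dimensional real left Leibniz algebra and define K(u,v) = −(1/2)(tr(L_u ∘ R_v) + tr(L_v ∘ R_u)), where L_u(v)=u•v and R_u(v)=v•u. Then K is a symmetric bilinear form on g which is L-invariant, R-invariant and associative, and K(u,v)=0 for every u ∈ Leib(g) and every v ∈ g. -/
/-- On a finite-dimensional real left Leibniz algebra `(g, •)`, the
Killing form `K(u,v) = -(1/2)(tr(L_u ∘ R_v) + tr(L_v ∘ R_u))` is a symmetric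
bilinear form that is L-invariant, R-invariant and associative, and vanishes
on the Leibniz ideal `Leib(g) = span {u•v + v•u}`. -/
theorem killing_form_bi_invariant {V : Type*} [AddCommGroup V] [Module ℝ V]
    [FiniteDimensional ℝ V]
    (mul : V →ₗ[ℝ] V →ₗ[ℝ] V)
    (hleib : ∀ u v w, mul u (mul v w) = mul (mul u v) w + mul v (mul u w)) :
    ∀ K : V → V → ℝ,
      (∀ u v, K u v = -(1/2) * (LinearMap.trace ℝ V (mul u ∘ₗ mul.flip v) +
        LinearMap.trace ℝ V (mul v ∘ₗ mul.flip u))) →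
      (∀ u v, K u v = K v u) ∧
      (∀ u v w, K (mul u v) w + K v (mul u w) = 0) ∧
      (∀ u v w, K (mul u v) w + K u (mul w v) = 0) ∧
      (∀ u v w, K (mul u v) w = K u (mul v w)) ∧
      (∀ u, u ∈ Submodule.span ℝ {x | ∃ a b, x = mul a b + mul b a} →
        ∀ v, K u v = 0) := by
  intro K hK
  set tr := LinearMap.trace ℝ V with htr
  -- T is the basic bilinear form T(u,v) = tr (L_u ∘ R_v)
  set T : V → V → ℝ := fun u v => tr (mul u ∘ₗ mul.flip v) with hT
  -- Operator identity: L_{u•v} = L_u ∘ L_v - L_v ∘ L_u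
  have opL : ∀ u v : V, mul (mul u v) = mul u ∘ₗ mul v - mul v ∘ₗ mul u := by
    intro u v; ext w
    simp only [LinearMap.sub_apply, LinearMap.comp_apply]
    rw [hleib u v w]; abel
  -- Operator identity: R_{u•w} = L_u ∘ R_w - R_w ∘ L_u
  have opR : ∀ u w : V, mul.flip (mul u w) = mul u ∘ₗ mul.flip w - mul.flip w ∘ₗ mul u := by
    intro u w; ext v
    simp only [LinearMap.sub_apply, LinearMap.comp_apply, LinearMap.flip_apply]
    rw [hleib u v w]; abel
  -- L vanishes on generators of Leib(g)
  have Lzero : ∀ a b : V, mul (mul a b + mul b a) = 0 := by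
    intro a b
    rw [map_add, opL a b, opL b a]; abel
  -- R_b ∘ L_a = -(R_b ∘ R_a)
  have opRR : ∀ a b : V, mul.flip b ∘ₗ mul a + mul.flip b ∘ₗ mul.flip a = 0 := by
    intro a b; ext u
    simp only [LinearMap.add_apply, LinearMap.comp_apply, LinearMap.flip_apply,
      LinearMap.zero_apply]
    have h := congrArg (fun f : V →ₗ[ℝ] V => f b) (Lzero a u)
    simpa [map_add] using h
  -- T is symmetric
  have Tsymm : ∀ u v : V, T u v = T v u := by
    intro u v
    have c1 : tr (mul u ∘ₗ mul.flip v) = tr (mul.flip v ∘ₗ mul u) :=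
      (LinearMap.trace_comp_comm' _ _).symm
    have c2 : tr (mul v ∘ₗ mul.flip u) = tr (mul.flip u ∘ₗ mul v) :=
      (LinearMap.trace_comp_comm' _ _).symm
    have e1 : tr (mul.flip v ∘ₗ mul u) + tr (mul.flip v ∘ₗ mul.flip u) = 0 := by
      rw [← map_add, opRR u v, map_zero]
    have e2 : tr (mul.flip u ∘ₗ mul v) + tr (mul.flip u ∘ₗ mul.flip v) = 0 := by
      rw [← map_add, opRR v u, map_zero]
    have e3 : tr (mul.flip v ∘ₗ mul.flip u) = tr (mul.flip u ∘ₗ mul.flip v) :=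
      LinearMap.trace_comp_comm' _ _
    simp only [hT]
    rw [c1, c2]
    linarith
  -- L-invariance of T
  have TLinv : ∀ u v w : V, T (mul u v) w + T v (mul u w) = 0 := by
    intro u v w
    have key : mul (mul u v) ∘ₗ mul.flip w + mul v ∘ₗ mul.flip (mul u w)
        = mul u ∘ₗ (mul v ∘ₗ mul.flip w) - (mul v ∘ₗ mul.flip w) ∘ₗ mul u := by
      rw [opL, opR]; ext x
      simp only [LinearMap.add_apply, LinearMap.sub_apply, LinearMap.comp_apply,
        map_add, map_sub, map_smul, map_neg]
      abel
    have := congrArg tr key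
    rw [map_add, map_sub] at this
    have cyc : tr (mul u ∘ₗ (mul v ∘ₗ mul.flip w)) = tr ((mul v ∘ₗ mul.flip w) ∘ₗ mul u) :=
      (LinearMap.trace_comp_comm' _ _).symm
    simp only [hT]
    rw [this, cyc]; ring
  -- T vanishes when the first argument is a generator of Leib(g)
  have Tgen : ∀ a b v : V, T (mul a b + mul b a) v = 0 := by
    intro a b v
    simp only [hT]
    rw [Lzero a b]
    simp
  -- additivity of T in second argument
  have Tadd2 : ∀ u x y : V, T u (x + y) = T u x + T u y := by
    intro u x y
    simp only [hT, map_add, LinearMap.comp_add]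
  -- R-invariance of T
  have TRinv : ∀ u v w : V, T (mul u v) w + T u (mul w v) = 0 := by
    intro u v w
    have h1 : T (mul u v) w = -T v (mul u w) := by
      have := TLinv u v w; linarith
    have h2 : T u (mul w v) = T (mul w v) u := Tsymm _ _
    have h3 : T (mul w v) u = -T v (mul w u) := by
      have := TLinv w v u; linarith
    have h4 : T v (mul u w) + T v (mul w u) = T v (mul u w + mul w u) :=
      (Tadd2 v _ _).symm
    have h5 : T v (mul u w + mul w u) = 0 := by
      rw [Tsymm]; exact Tgen u w v
    linarith
  -- associativity of T
  have Tassoc : ∀ u v w : V, T (mul u v) w = T u (mul v w) := by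
    intro u v w
    have h1 := TRinv u v w
    have h2 : T u (mul w v) + T u (mul v w) = T u (mul w v + mul v w) :=
      (Tadd2 u _ _).symm
    have h3 : T u (mul w v + mul v w) = 0 := by
      rw [Tsymm]; exact Tgen w v u
    linarith
  -- K equals -T
  have hKT : ∀ u v : V, K u v = -T u v := by
    intro u v
    rw [hK u v]
    have : T v u = T u v := Tsymm v u
    simp only [hT] at this ⊢
    rw [this]; ring
  refine ⟨?_, ?_, ?_, ?_, ?_⟩
  · intro u v; rw [hKT, hKT, Tsymm]
  · intro u v w; rw [hKT, hKT]; have := TLinv u v w; linarith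
  · intro u v w; rw [hKT, hKT]; have := TRinv u v w; linarith
  · intro u v w; rw [hKT, hKT, Tassoc]
  · intro u hu v
    rw [hKT]
    have : T u v = 0 := by
      induction hu using Submodule.span_induction with
      | mem x hx =>
        obtain ⟨a, b, rfl⟩ := hx
        exact Tgen a b v
      | zero =>
        simp only [hT, map_zero]
        simp
      | add x y _ _ hx hy =>
        have : T (x + y) v = T x v + T y v := by
          simp only [hT, map_add, LinearMap.add_comp]
        rw [this, hx, hy]; ring
      | smul c x _ hx =>
        have : T (c • x) v = c * T x v := by
          simp only [hT, map_smul, LinearMap.smul_comp, smul_eq_mul]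
        rw [this, hx]; ring
    rw [this]; ring
end

section
/- Let (g,•) be a finite-dimensional real left Leibniz algebra equipped with a metric ⟨,⟩ that is associative, i.e., ⟨u•v,w⟩ = ⟨u,v•w⟩ for all u,v,w ∈ g. Then (g,•) is also a right Leibniz algebra: (v•w)•u = (v•u)•w + v•(w•u) for all u,v,w ∈ g. -/
/-- A finite-dimensional real left Leibniz algebra with an
associative metric is also a right Leibniz algebra. -/
theorem leftLeibniz_assocMetric_rightLeibniz {V : Type*} [AddCommGroup V]
    [Module ℝ V] [FiniteDimensional ℝ V]
    (mul : V →ₗ[ℝ] V →ₗ[ℝ] V)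
    (hleib : ∀ u v w, mul u (mul v w) = mul (mul u v) w + mul v (mul u w))
    (B : V →ₗ[ℝ] V →ₗ[ℝ] ℝ)
    (hsymm : ∀ u v, B u v = B v u)
    (hnd : ∀ u, (∀ v, B u v = 0) → u = 0)
    (hassoc : ∀ u v w, B (mul u v) w = B u (mul v w)) :
    ∀ u v w, mul (mul v w) u = mul (mul v u) w + mul v (mul w u) := by
  intro u v w
  have key : ∀ x, B (mul (mul v w) u - (mul (mul v u) w + mul v (mul w u))) x = 0 := by
    intro x
    have h1 : B (mul (mul v w) u) x = B v (mul w (mul u x)) := by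
      rw [hassoc, hassoc]
    have h2 : B (mul (mul v u) w) x = B v (mul u (mul w x)) := by
      rw [hassoc, hassoc]
    have h3 : B (mul v (mul w u)) x = B v (mul (mul w u) x) := by
      rw [hassoc]
    have hl := hleib w u x
    simp only [map_sub, map_add, LinearMap.sub_apply, LinearMap.add_apply, h1, h2, h3, hl]
    ring
  exact sub_eq_zero.mp (hnd _ key)
end

section
/- Let (g,[,]) be a finite-dimensional real Lie algebra, Z(g) = {z ∈ g : [z,x]=0 for all x} its center, and ω : g × g → g a symmetric bilinear map with values in Z(g) satisfying ω([x,y],z) = 0 and ω(ω(x,y),z) = 0 for all x,y,z ∈ g. Define the product u•v = [u,v] + ω(u,v) and let ⟨,⟩ be a metric on g. Then ⟨,⟩ is associative for • (⟨u•v,w⟩ = ⟨u,v•w⟩ for all u,v,w) if and only if: ⟨,⟩ is invariant for [,] (⟨[u,v],w⟩ = ⟨u,[v,w]⟩ for all u,v,w), and there exist a symmetric trilinear form T : g × g × g → ℝ and a totally isotropic subspace I ⊆ Z(g) such that T(x,y,z) = 0 whenever x ∈ I^⊥, and ⟨ω(x,y),z⟩ = T(x,y,z) for all x,y,z ∈ g.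 -/
/-- For a symmetric Leibniz algebra `u•v = [u,v] + ω(u,v)` built
from a Lie algebra `(g,[,])` and a symmetric bilinear map `ω` into the center
with `ω([x,y],z) = ω(ω(x,y),z) = 0`, a metric `⟨,⟩` is associative for `•` iff
`⟨,⟩` is invariant for `[,]` and there exist a symmetric trilinear form `T`
and a totally isotropic subspace `I ⊆ Z(g)` with `T(I^⊥,·,·) = 0` and
`⟨ω(x,y),z⟩ = T(x,y,z)`. -/
theorem metrised_symmetric_leibniz_characterization {V : Type*} [AddCommGroup V]
    [Module ℝ V] [FiniteDimensional ℝ V]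
    (br : V →ₗ[ℝ] V →ₗ[ℝ] V)
    (hskew : ∀ u v, br u v = - br v u)
    (hjac : ∀ u v w, br u (br v w) = br (br u v) w + br v (br u w))
    (ω : V →ₗ[ℝ] V →ₗ[ℝ] V)
    (hωsymm : ∀ x y, ω x y = ω y x)
    (hωcenter : ∀ x y z, br (ω x y) z = 0)
    (hω1 : ∀ x y z, ω (br x y) z = 0)
    (hω2 : ∀ x y z, ω (ω x y) z = 0)
    (B : V →ₗ[ℝ] V →ₗ[ℝ] ℝ)
    (hsymm : ∀ u v, B u v = B v u)
    (hnd : ∀ u, (∀ v, B u v = 0) → u = 0) :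
    (∀ u v w, B (br u v + ω u v) w = B u (br v w + ω v w)) ↔
      ((∀ u v w, B (br u v) w = B u (br v w)) ∧
        ∃ T : V →ₗ[ℝ] V →ₗ[ℝ] V →ₗ[ℝ] ℝ,
          (∀ x y z, T x y z = T y x z) ∧ (∀ x y z, T x y z = T x z y) ∧
          ∃ I : Submodule ℝ V,
            (∀ z ∈ I, ∀ x, br z x = 0) ∧
            (∀ x ∈ I, ∀ y ∈ I, B x y = 0) ∧
            (∀ x, (∀ i ∈ I, B x i = 0) → ∀ y z, T x y z = 0) ∧
            (∀ x y z, B (ω x y) z = T x y z)) := by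
  constructor
  · intro h
    -- Step 1: B (br u v) u = 0
    have h0 : ∀ u v, B (br u v) u = 0 := by
      intro u v
      have h1 := h u v u
      rw [hskew v u, hωsymm v u] at h1
      simp only [map_add, map_neg, LinearMap.add_apply, LinearMap.neg_apply] at h1
      have h2 := hsymm u (br u v)
      have h3 := hsymm u (ω u v)
      linarith
    -- Step 2: invariance
    have hinv : ∀ u v w, B (br u v) w = B u (br v w) := by
      intro u v w
      have h1 := h0 (u + w) v
      simp only [map_add, LinearMap.add_apply] at h1
      have h2 := h0 u v
      have h3 := h0 w v
      have h4 : B (br w v) u = - B (br v w) u := by rw [hskew w v]; simp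
      have h5 := hsymm u (br v w)
      linarith
    -- Step 3: cyclic symmetry of S(u,v,w) = B (ω u v) w
    have hcyc : ∀ u v w, B (ω u v) w = B (ω v w) u := by
      intro u v w
      have h1 := h u v w
      simp only [map_add, LinearMap.add_apply] at h1
      have h2 := hinv u v w
      have h3 := hsymm u (ω v w)
      linarith
    refine ⟨hinv, ω.compr₂ B, ?_, ?_,
      Submodule.span ℝ (Set.range fun p : V × V => ω p.1 p.2), ?_, ?_, ?_, ?_⟩
    · intro x y z
      simp only [LinearMap.compr₂_apply, hωsymm x y]
    · intro x y z
      simp only [LinearMap.compr₂_apply]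
      rw [hcyc x y z, hcyc x z y, hωsymm z y]
    · intro z hz x
      induction hz using Submodule.span_induction with
      | mem v hv => obtain ⟨⟨a, b⟩, rfl⟩ := hv; exact hωcenter a b x
      | zero => simp
      | add a b _ _ ha hb => simp [map_add, LinearMap.add_apply, ha, hb]
      | smul c a _ ha => simp [map_smul, LinearMap.smul_apply, ha]
    · intro x hx y hy
      have key : ∀ a b y, y ∈ Submodule.span ℝ (Set.range fun p : V × V => ω p.1 p.2) →
          B (ω a b) y = 0 := by
        intro a b y hy
        induction hy using Submodule.span_induction with
        | mem v hv =>
            obtain ⟨⟨c, d⟩, rfl⟩ := hv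
            rw [hcyc a b (ω c d), hωsymm b (ω c d), hω2]
            simp
        | zero => simp
        | add p q _ _ hp hq => simp [map_add, hp, hq]
        | smul c p _ hp => simp [map_smul, hp]
      induction hx using Submodule.span_induction with
      | mem v hv => obtain ⟨⟨a, b⟩, rfl⟩ := hv; exact key a b y hy
      | zero => simp
      | add p q _ _ hp hq => simp [map_add, LinearMap.add_apply, hp, hq]
      | smul c p _ hp => simp [map_smul, LinearMap.smul_apply, hp]
    · intro x hx y z
      simp only [LinearMap.compr₂_apply]
      rw [hcyc x y z, hsymm]
      exact hx _ (Submodule.subset_span ⟨(y, z), rfl⟩)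
    · intro x y z
      simp [LinearMap.compr₂_apply]
  · rintro ⟨hinv, T, hT1, hT2, I, hIc, hIiso, hTvan, hTB⟩ u v w
    simp only [map_add, LinearMap.add_apply]
    have h1 := hinv u v w
    have h2 : B (ω u v) w = B u (ω v w) := by
      rw [hTB u v w, hsymm u (ω v w), hTB v w u]
      rw [hT1 v w u, hT2 w v u, hT1 w u v, hT2 u w v]
    linarith
end

section
/- Let (g,[,]) be a finite-dimensional real Lie algebra with [g,g] = g, let ω : g × g → g be a symmetric bilinear map with values in the center Z(g) satisfying ω([x,y],z) = 0 and ω(ω(x,y),z) = 0 for all x,y,z, and set u•v = [u,v] + ω(u,v). If ⟨,⟩ is a metric on g that is associative for • (⟨u•v,w⟩ = ⟨u,v•w⟩ for all u,v,w), then ω = 0, so that (g,•,⟨,⟩) is a quadratic Lie algebra. -/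
/-- For a symmetric Leibniz algebra `u•v = [u,v] + ω(u,v)` built
from a perfect Lie algebra (`[g,g] = g`) and `ω` as usual, any metric
associative for `•` forces `ω = 0`, so that `(g,•,⟨,⟩)` is a quadratic Lie
algebra. -/
theorem perfect_metrised_is_quadratic_lie {V : Type*} [AddCommGroup V]
    [Module ℝ V] [FiniteDimensional ℝ V]
    (br : V →ₗ[ℝ] V →ₗ[ℝ] V)
    (hskew : ∀ u v, br u v = - br v u)
    (hjac : ∀ u v w, br u (br v w) = br (br u v) w + br v (br u w))
    (ω : V →ₗ[ℝ] V →ₗ[ℝ] V)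
    (hωsymm : ∀ x y, ω x y = ω y x)
    (hωcenter : ∀ x y z, br (ω x y) z = 0)
    (hω1 : ∀ x y z, ω (br x y) z = 0)
    (hω2 : ∀ x y z, ω (ω x y) z = 0)
    (hperfect : Submodule.span ℝ {x | ∃ u v, x = br u v} = ⊤)
    (B : V →ₗ[ℝ] V →ₗ[ℝ] ℝ)
    (hsymm : ∀ u v, B u v = B v u)
    (hnd : ∀ u, (∀ v, B u v = 0) → u = 0)
    (hassoc : ∀ u v w, B (br u v + ω u v) w = B u (br v w + ω v w)) :
    (∀ x y, ω x y = 0) ∧ (∀ u v w, B (br u v) w = B u (br v w)) := by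
  have hω : ∀ x y, ω x y = 0 := by
    intro x y
    have hx : x ∈ Submodule.span ℝ {x | ∃ u v, x = br u v} := by
      rw [hperfect]; trivial
    induction hx using Submodule.span_induction with
    | mem a ha => obtain ⟨u, v, rfl⟩ := ha; exact hω1 u v y
    | zero => simp
    | add a b _ _ ha hb => rw [map_add, LinearMap.add_apply, ha, hb, add_zero]
    | smul c a _ ha => rw [map_smul, LinearMap.smul_apply, ha, smul_zero]
  refine ⟨hω, fun u v w => ?_⟩
  have := hassoc u v w
  simpa [hω] using this
end

section
/- Let (g,[,]) be a finite-dimensional real Lie algebra, ω : g × g → g a symmetric bilinear map with values in the center Z(g) satisfying ω([x,y],z) = 0 and ω(ω(x,y),z) = 0 for all x,y,z, and set u•v = [u,v] + ω(u,v). Let ⟨,⟩ be a metric on g that is associative for • (⟨u•v,w⟩ = ⟨u,v•w⟩ for all u,v,w). If the restriction of ⟨,⟩ to Z(g) is positive definite, then ω = 0, so that (g,•,⟨,⟩) is a quadratic Lie algebra. -/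
/-- For a symmetric Leibniz algebra `u•v = [u,v] + ω(u,v)` with an
associative metric whose restriction to the center `Z(g)` is positive
definite, one has `ω = 0`, so `(g,•,⟨,⟩)` is a quadratic Lie algebra. -/
theorem posdef_center_metrised_is_quadratic_lie {V : Type*} [AddCommGroup V]
    [Module ℝ V] [FiniteDimensional ℝ V]
    (br : V →ₗ[ℝ] V →ₗ[ℝ] V)
    (hskew : ∀ u v, br u v = - br v u)
    (hjac : ∀ u v w, br u (br v w) = br (br u v) w + br v (br u w))
    (ω : V →ₗ[ℝ] V →ₗ[ℝ] V)
    (hωsymm : ∀ x y, ω x y = ω y x)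
    (hωcenter : ∀ x y z, br (ω x y) z = 0)
    (hω1 : ∀ x y z, ω (br x y) z = 0)
    (hω2 : ∀ x y z, ω (ω x y) z = 0)
    (B : V →ₗ[ℝ] V →ₗ[ℝ] ℝ)
    (hsymm : ∀ u v, B u v = B v u)
    (hnd : ∀ u, (∀ v, B u v = 0) → u = 0)
    (hposdef : ∀ z, (∀ x, br z x = 0) → z ≠ 0 → 0 < B z z)
    (hassoc : ∀ u v w, B (br u v + ω u v) w = B u (br v w + ω v w)) :
    (∀ x y, ω x y = 0) ∧ (∀ u v w, B (br u v) w = B u (br v w)) := by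
  have hω0 : ∀ x y, ω x y = 0 := by
    intro x y
    set c := ω x y with hc
    have hcen : ∀ z, br c z = 0 := fun z => hωcenter x y z
    have hrc : ∀ z, br z c = 0 := fun z => by rw [hskew, hcen, neg_zero]
    have hωc : ∀ z, ω z c = 0 := fun z => by rw [hωsymm]; exact hω2 x y z
    have h1 := hassoc x y c
    have h2 := hassoc y x c
    rw [hrc, hωc, add_zero, map_zero] at h1
    rw [hrc, hωc, add_zero, map_zero, hskew y x, hωsymm y x, ← hc] at h2
    have hBcc : B c c = 0 := by
      have hsum : B (br x y + c) c + B (-br x y + c) c = 0 := by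
        rw [h1, h2]; ring
      simp only [map_add, map_neg, LinearMap.add_apply, LinearMap.neg_apply] at hsum
      linarith
    by_contra h
    exact absurd hBcc (ne_of_gt (hposdef c hcen h))
  refine ⟨hω0, fun u v w => ?_⟩
  have := hassoc u v w
  rwa [hω0, hω0, add_zero, add_zero] at this
end

section
/- Let (g,•) be a finite-dimensional real left Leibniz algebra with an L-invariant metric ⟨,⟩, and let I ⊆ g be an ideal (g•I ⊆ I and I•g ⊆ I). Then I^⊥ is a left ideal (g•I^⊥ ⊆ I^⊥), I•I^⊥ = 0 (x•y = 0 for all x ∈ I, y ∈ I^⊥), and I^⊥ is an ideal of g if and only if I^⊥•I = 0. -/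
/-- In a left Leibniz algebra with an L-invariant metric, for an
ideal `I`: `I^⊥` is a left ideal, `I • I^⊥ = 0`, and `I^⊥` is an ideal iff
`I^⊥ • I = 0`. -/
theorem perp_of_ideal_L_invariant {V : Type*} [AddCommGroup V]
    [Module ℝ V] [FiniteDimensional ℝ V]
    (mul : V →ₗ[ℝ] V →ₗ[ℝ] V)
    (hleib : ∀ u v w, mul u (mul v w) = mul (mul u v) w + mul v (mul u w))
    (B : V →ₗ[ℝ] V →ₗ[ℝ] ℝ)
    (hsymm : ∀ u v, B u v = B v u)
    (hnd : ∀ u, (∀ v, B u v = 0) → u = 0)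
    (hL : ∀ u v w, B (mul u v) w + B v (mul u w) = 0)
    (I : Submodule ℝ V)
    (hleft : ∀ u, ∀ x ∈ I, mul u x ∈ I)
    (hright : ∀ x ∈ I, ∀ u, mul x u ∈ I) :
    (∀ u, ∀ y ∈ {y | ∀ x ∈ I, B y x = 0}, mul u y ∈ {y | ∀ x ∈ I, B y x = 0}) ∧
    (∀ x ∈ I, ∀ y ∈ {y | ∀ x ∈ I, B y x = 0}, mul x y = 0) ∧
    (((∀ u, ∀ y ∈ {y | ∀ x ∈ I, B y x = 0}, mul u y ∈ {y | ∀ x ∈ I, B y x = 0}) ∧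
      (∀ y ∈ {y | ∀ x ∈ I, B y x = 0}, ∀ u, mul y u ∈ {y | ∀ x ∈ I, B y x = 0})) ↔
     (∀ y ∈ {y | ∀ x ∈ I, B y x = 0}, ∀ x ∈ I, mul y x = 0)) := by
  have hLeft : ∀ u, ∀ y ∈ {y | ∀ x ∈ I, B y x = 0}, mul u y ∈ {y | ∀ x ∈ I, B y x = 0} := by
    intro u y hy x hx
    have h := hL u y x
    have : B y (mul u x) = 0 := hy _ (hleft u x hx)
    linarith
  refine ⟨hLeft, ?_, ?_⟩
  · intro x hx y hy
    apply hnd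
    intro v
    have h := hL x y v
    have : B y (mul x v) = 0 := hy _ (hright x hx v)
    linarith
  · constructor
    · rintro ⟨_, hR⟩ y hy x hx
      apply hnd
      intro v
      have h := hL y x v
      have h2 : B (mul y v) x = 0 := hR y hy v x hx
      rw [hsymm x (mul y v)] at h
      linarith
    · intro h0
      refine ⟨hLeft, ?_⟩
      intro y hy u x hx
      have h := hL y u x
      have h2 : mul y x = 0 := h0 y hy x hx
      rw [h2] at h
      simp at h
      linarith
end

section
/- Let (g,•) be a finite-dimensional real left Leibniz algebra with an R-invariant metric ⟨,⟩, and let I ⊆ g be an ideal (g•I ⊆ I and I•g ⊆ I). Then I^⊥ is a right ideal (I^⊥•g ⊆ I^⊥), I^⊥•I = 0 (x•y = 0 for all x ∈ I^⊥, y ∈ I), and I^⊥ is an ideal of g if and only if I•I^⊥ = 0. -/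
/-- In a left Leibniz algebra with an R-invariant metric, for an
ideal `I`: `I^⊥` is a right ideal, `I^⊥ • I = 0`, and `I^⊥` is an ideal iff
`I • I^⊥ = 0`. -/
theorem perp_of_ideal_R_invariant {V : Type*} [AddCommGroup V]
    [Module ℝ V] [FiniteDimensional ℝ V]
    (mul : V →ₗ[ℝ] V →ₗ[ℝ] V)
    (hleib : ∀ u v w, mul u (mul v w) = mul (mul u v) w + mul v (mul u w))
    (B : V →ₗ[ℝ] V →ₗ[ℝ] ℝ)
    (hsymm : ∀ u v, B u v = B v u)
    (hnd : ∀ u, (∀ v, B u v = 0) → u = 0)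
    (hR : ∀ u v w, B (mul u v) w + B u (mul w v) = 0)
    (I : Submodule ℝ V)
    (hleft : ∀ u, ∀ x ∈ I, mul u x ∈ I)
    (hright : ∀ x ∈ I, ∀ u, mul x u ∈ I) :
    (∀ y ∈ {y | ∀ x ∈ I, B y x = 0}, ∀ u, mul y u ∈ {y | ∀ x ∈ I, B y x = 0}) ∧
    (∀ y ∈ {y | ∀ x ∈ I, B y x = 0}, ∀ x ∈ I, mul y x = 0) ∧
    (((∀ u, ∀ y ∈ {y | ∀ x ∈ I, B y x = 0}, mul u y ∈ {y | ∀ x ∈ I, B y x = 0}) ∧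
      (∀ y ∈ {y | ∀ x ∈ I, B y x = 0}, ∀ u, mul y u ∈ {y | ∀ x ∈ I, B y x = 0})) ↔
     (∀ x ∈ I, ∀ y ∈ {y | ∀ x ∈ I, B y x = 0}, mul x y = 0)) := by
  have rightid : ∀ y ∈ {y | ∀ x ∈ I, B y x = 0}, ∀ u, mul y u ∈ {y | ∀ x ∈ I, B y x = 0} := by
    intro y hy u x hx
    have := hR y u x
    have h2 := hy (mul x u) (hright x hx u)
    linarith
  refine ⟨rightid, ?_, ?_⟩
  · intro y hy x hx
    apply hnd
    intro v
    have := hR y x v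
    have h2 := hy (mul v x) (hleft v x hx)
    linarith
  · constructor
    · rintro ⟨hL, _⟩ x hx y hy
      apply hnd
      intro v
      have := hR x y v
      have h2 := hL v y hy
      have h3 := h2 x hx
      have h4 : B x (mul v y) = 0 := by rw [hsymm]; exact h3
      linarith
    · intro h0
      refine ⟨?_, rightid⟩
      intro u y hy x hx
      have := hR u y x
      have h2 : mul x y = 0 := h0 x hx y hy
      rw [h2] at this
      simp at this
      linarith
end

section
/- Let (g,•) be a finite-dimensional real left Leibniz algebra with an L-invariant metric ⟨,⟩. Then: (i) Leib(g)^⊥ = {u ∈ g : ⟨v•u,w⟩ + ⟨v,w•u⟩ = 0 for all v,w ∈ g}; (ii) Leib(g)^⊥ is a left ideal of g; (iii) I := Leib(g) + Leib(g)^⊥ is an ideal of g (g•I ⊆ I and I•g ⊆ I); and (iv) x•y = 0 for all x ∈ I and y ∈ I^⊥ = Leib(g) ∩ Leib(g)^⊥. -/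
/-- The orthogonal of a submodule with respect to a bilinear form. -/
def bilinPerp {V : Type*} [AddCommGroup V] [Module ℝ V]
    (B : V →ₗ[ℝ] V →ₗ[ℝ] ℝ) (W : Submodule ℝ V) : Submodule ℝ V where
  carrier := {u | ∀ x ∈ W, B u x = 0}
  add_mem' := by
    intro a b ha hb x hx
    simp [map_add, LinearMap.add_apply, ha x hx, hb x hx]
  zero_mem' := by
    intro x hx
    simp
  smul_mem' := by
    intro c a ha x hx
    simp [map_smul, LinearMap.smul_apply, ha x hx]

/-!
Every element of `Leib(g)` acts trivially on the left, and `Leib(g)` is a left ideal; by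
L-invariance, `⟨u, v•w + w•v⟩ = -(⟨v•u, w⟩ + ⟨v, w•u⟩)`, which gives (i), and `Leib(g)^⊥` is then
a left ideal. Writing `x•u = (x•u + u•x) - u•x` shows that `I` is also a right ideal. Since the
metric is nondegenerate, `Leib(g)^⊥⊥ = Leib(g)`, so `I^⊥ = Leib(g) ∩ Leib(g)^⊥`, and
`⟨x•y, w⟩ = -⟨y, x•w⟩ = 0` for `x ∈ I`, `y ∈ I^⊥`.
-/

section Leibniz

variable {R V : Type*} [CommRing R] [AddCommGroup V] [Module R V] (mul : V →ₗ[R] V →ₗ[R] V)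

def leibSpan : Submodule R V :=
  Submodule.span R {x | ∃ a b, x = mul a b + mul b a}

variable {mul}

theorem mul_add_mul_swap_mem_leibSpan (a b : V) : mul a b + mul b a ∈ leibSpan mul :=
  Submodule.subset_span ⟨a, b, rfl⟩

theorem leibSpan_le_iff {p : Submodule R V} :
    leibSpan mul ≤ p ↔ ∀ a b, mul a b + mul b a ∈ p := by
  rw [leibSpan, Submodule.span_le]
  exact ⟨fun h a b => h ⟨a, b, rfl⟩, by rintro h _ ⟨a, b, rfl⟩; exact h a b⟩

theorem leibSpan_le_ker_mul
    (hleib : ∀ u v w, mul u (mul v w) = mul (mul u v) w + mul v (mul u w)) :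
    leibSpan mul ≤ LinearMap.ker mul :=
  leibSpan_le_iff.2 fun a b => LinearMap.ext fun u => by
    simp only [map_add, LinearMap.add_apply, LinearMap.zero_apply]
    linear_combination (norm := abel) -hleib a b u - hleib b a u

theorem mul_mem_leibSpan
    (hleib : ∀ u v w, mul u (mul v w) = mul (mul u v) w + mul v (mul u w))
    (u : V) {x : V} (hx : x ∈ leibSpan mul) : mul u x ∈ leibSpan mul := by
  refine (leibSpan_le_iff (p := (leibSpan mul).comap (mul u))).2 (fun a b => ?_) hx
  have key : mul u (mul a b + mul b a)
      = (mul (mul u a) b + mul b (mul u a)) + (mul (mul u b) a + mul a (mul u b)) := by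
    rw [map_add, hleib u a b, hleib u b a]; abel
  rw [Submodule.mem_comap, key]
  exact add_mem (mul_add_mul_swap_mem_leibSpan _ _) (mul_add_mul_swap_mem_leibSpan _ _)

end Leibniz

section Metric

variable {V : Type*} [AddCommGroup V] [Module ℝ V] {B : V →ₗ[ℝ] V →ₗ[ℝ] ℝ}

theorem mem_bilinPerp_iff_le_ker {W : Submodule ℝ V} {u : V} :
    u ∈ bilinPerp B W ↔ W ≤ LinearMap.ker (B u) :=
  Iff.rfl

theorem bilinPerp_sup (W W' : Submodule ℝ V) :
    bilinPerp B (W ⊔ W') = bilinPerp B W ⊓ bilinPerp B W' := by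
  ext u
  simp only [Submodule.mem_inf, mem_bilinPerp_iff_le_ker, sup_le_iff]

theorem bilinPerp_eq_orthogonal (hsymm : ∀ u v, B u v = B v u) (W : Submodule ℝ V) :
    bilinPerp B W = LinearMap.BilinForm.orthogonal B W := by
  ext u
  exact forall₂_congr fun x _ => by rw [hsymm]

theorem bilinPerp_bilinPerp [FiniteDimensional ℝ V] (hsymm : ∀ u v, B u v = B v u)
    (hnd : ∀ u, (∀ v, B u v = 0) → u = 0) (W : Submodule ℝ V) :
    bilinPerp B (bilinPerp B W) = W := by
  have hrefl : LinearMap.BilinForm.IsRefl B := fun x y h => (hsymm y x).trans h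
  have hndB : LinearMap.BilinForm.Nondegenerate B :=
    ⟨hnd, fun y hy => hnd y fun v => (hsymm y v).trans (hy v)⟩
  rw [bilinPerp_eq_orthogonal hsymm, bilinPerp_eq_orthogonal hsymm]
  exact LinearMap.BilinForm.orthogonal_orthogonal hndB hrefl W

variable {mul : V →ₗ[ℝ] V →ₗ[ℝ] V}

theorem mul_mem_bilinPerp_of_forall_mul_mem
    (hL : ∀ u v w, B (mul u v) w + B v (mul u w) = 0) {W : Submodule ℝ V}
    (hW : ∀ u, ∀ x ∈ W, mul u x ∈ W) (u : V) {y : V} (hy : y ∈ bilinPerp B W) :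
    mul u y ∈ bilinPerp B W := by
  intro x hx
  linarith [hL u y x, hy (mul u x) (hW u x hx)]

theorem apply_mul_add_mul_swap (hsymm : ∀ u v, B u v = B v u)
    (hL : ∀ u v w, B (mul u v) w + B v (mul u w) = 0) (u v w : V) :
    B u (mul v w + mul w v) = -(B (mul v u) w + B v (mul w u)) := by
  rw [map_add]
  linarith [hL v u w, hL w u v, hsymm v (mul w u)]

theorem mem_bilinPerp_leibSpan_iff (hsymm : ∀ u v, B u v = B v u)
    (hL : ∀ u v w, B (mul u v) w + B v (mul u w) = 0) {u : V} :
    u ∈ bilinPerp B (leibSpan mul) ↔ ∀ v w, B (mul v u) w + B v (mul w u) = 0 := by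
  simp only [mem_bilinPerp_iff_le_ker, leibSpan_le_iff, LinearMap.mem_ker,
    apply_mul_add_mul_swap hsymm hL, neg_eq_zero]

theorem mul_eq_zero_of_mem_bilinPerp (hnd : ∀ u, (∀ v, B u v = 0) → u = 0)
    (hL : ∀ u v w, B (mul u v) w + B v (mul u w) = 0) {W : Submodule ℝ V} {x y : V}
    (hx : ∀ w, mul x w ∈ W) (hy : y ∈ bilinPerp B W) : mul x y = 0 :=
  hnd _ fun w => by linarith [hL x y w, hy (mul x w) (hx w)]

theorem mul_mem_sup_bilinPerp_leibSpan
    (hleib : ∀ u v w, mul u (mul v w) = mul (mul u v) w + mul v (mul u w))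
    (hL : ∀ u v w, B (mul u v) w + B v (mul u w) = 0) (u : V) {x : V}
    (hx : x ∈ leibSpan mul ⊔ bilinPerp B (leibSpan mul)) :
    mul u x ∈ leibSpan mul ⊔ bilinPerp B (leibSpan mul) ∧
      mul x u ∈ leibSpan mul ⊔ bilinPerp B (leibSpan mul) := by
  obtain ⟨a, ha, b, hb, rfl⟩ := Submodule.mem_sup.mp hx
  have hbu := mul_mem_bilinPerp_of_forall_mul_mem hL (fun _ _ => mul_mem_leibSpan hleib _) u hb
  refine ⟨?_, ?_⟩
  · rw [map_add]
    exact add_mem (Submodule.mem_sup_left (mul_mem_leibSpan hleib u ha))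
      (Submodule.mem_sup_right hbu)
  · have hau : mul a u = 0 := LinearMap.congr_fun (leibSpan_le_ker_mul hleib ha) u
    rw [map_add, LinearMap.add_apply, hau, zero_add, ← add_sub_cancel_right (mul b u) (mul u b)]
    exact sub_mem (Submodule.mem_sup_left (mul_add_mul_swap_mem_leibSpan b u))
      (Submodule.mem_sup_right hbu)

end Metric

/-- In a left Leibniz algebra with an L-invariant metric:
(i) `Leib(g)^⊥ = {u : ⟨v•u,w⟩ + ⟨v,w•u⟩ = 0 ∀ v w}`; (ii) `Leib(g)^⊥` is a
left ideal; (iii) `I = Leib(g) + Leib(g)^⊥` is an ideal; (iv)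
`I^⊥ = Leib(g) ∩ Leib(g)^⊥` and `x•y = 0` for `x ∈ I`, `y ∈ I^⊥`. -/
theorem leib_perp_L_invariant {V : Type*} [AddCommGroup V]
    [Module ℝ V] [FiniteDimensional ℝ V]
    (mul : V →ₗ[ℝ] V →ₗ[ℝ] V)
    (hleib : ∀ u v w, mul u (mul v w) = mul (mul u v) w + mul v (mul u w))
    (B : V →ₗ[ℝ] V →ₗ[ℝ] ℝ)
    (hsymm : ∀ u v, B u v = B v u)
    (hnd : ∀ u, (∀ v, B u v = 0) → u = 0)
    (hL : ∀ u v w, B (mul u v) w + B v (mul u w) = 0)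
    (Leib : Submodule ℝ V)
    (hLeib : Leib = Submodule.span ℝ {x | ∃ a b, x = mul a b + mul b a}) :
    ((bilinPerp B Leib : Set V) =
        {u | ∀ v w, B (mul v u) w + B v (mul w u) = 0}) ∧
    (∀ u, ∀ y ∈ bilinPerp B Leib, mul u y ∈ bilinPerp B Leib) ∧
    ((∀ u, ∀ x ∈ Leib ⊔ bilinPerp B Leib, mul u x ∈ Leib ⊔ bilinPerp B Leib) ∧
     (∀ x ∈ Leib ⊔ bilinPerp B Leib, ∀ u, mul x u ∈ Leib ⊔ bilinPerp B Leib)) ∧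
    (bilinPerp B (Leib ⊔ bilinPerp B Leib) = Leib ⊓ bilinPerp B Leib ∧
     ∀ x ∈ Leib ⊔ bilinPerp B Leib, ∀ y ∈ bilinPerp B (Leib ⊔ bilinPerp B Leib),
       mul x y = 0) := by
  change Leib = leibSpan mul at hLeib
  subst hLeib
  have hI := fun u x hx => mul_mem_sup_bilinPerp_leibSpan (B := B) hleib hL u (x := x) hx
  refine ⟨Set.ext fun u => mem_bilinPerp_leibSpan_iff hsymm hL,
    fun u y => mul_mem_bilinPerp_of_forall_mul_mem hL (fun _ _ => mul_mem_leibSpan hleib _) u,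
    ⟨fun u x hx => (hI u x hx).1, fun x hx u => (hI u x hx).2⟩, ?_,
    fun x hx y => mul_eq_zero_of_mem_bilinPerp hnd hL fun w => (hI w x hx).2⟩
  rw [bilinPerp_sup, bilinPerp_bilinPerp hsymm hnd, inf_comm]
end

section
/- Let (g,•) be a finite-dimensional real left Leibniz algebra with an R-invariant metric ⟨,⟩. Then: (i) Leib(g)^⊥ = {u ∈ g : ⟨u•v,w⟩ + ⟨v,u•w⟩ = 0 for all v,w ∈ g}; (ii) Leib(g) ⊆ g•g ⊆ Leib(g)^⊥, so in particular Leib(g) is totally isotropic; and (iii) x•y = 0 for all x ∈ Leib(g)^⊥ and y ∈ Leib(g). -/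
lemma mem_bilinPerp {V : Type*} [AddCommGroup V] [Module ℝ V]
    (B : V →ₗ[ℝ] V →ₗ[ℝ] ℝ) (W : Submodule ℝ V) (u : V) :
    u ∈ bilinPerp B W ↔ ∀ x ∈ W, B u x = 0 := Iff.rfl

/-- In a left Leibniz algebra with an R-invariant metric:
(i) `Leib(g)^⊥ = {u : ⟨u•v,w⟩ + ⟨v,u•w⟩ = 0 ∀ v w}`;
(ii) `Leib(g) ⊆ g•g ⊆ Leib(g)^⊥` (so `Leib(g)` is totally isotropic);
(iii) `x•y = 0` for `x ∈ Leib(g)^⊥`, `y ∈ Leib(g)`. -/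
theorem leib_perp_R_invariant {V : Type*} [AddCommGroup V]
    [Module ℝ V] [FiniteDimensional ℝ V]
    (mul : V →ₗ[ℝ] V →ₗ[ℝ] V)
    (hleib : ∀ u v w, mul u (mul v w) = mul (mul u v) w + mul v (mul u w))
    (B : V →ₗ[ℝ] V →ₗ[ℝ] ℝ)
    (hsymm : ∀ u v, B u v = B v u)
    (hnd : ∀ u, (∀ v, B u v = 0) → u = 0)
    (hR : ∀ u v w, B (mul u v) w + B u (mul w v) = 0)
    (Leib gg : Submodule ℝ V)
    (hLeib : Leib = Submodule.span ℝ {x | ∃ a b, x = mul a b + mul b a})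
    (hgg : gg = Submodule.span ℝ {x | ∃ a b, x = mul a b}) :
    ((bilinPerp B Leib : Set V) =
        {u | ∀ v w, B (mul u v) w + B v (mul u w) = 0}) ∧
    (Leib ≤ gg ∧ gg ≤ bilinPerp B Leib ∧ Leib ≤ bilinPerp B Leib) ∧
    (∀ x ∈ bilinPerp B Leib, ∀ y ∈ Leib, mul x y = 0) := by
  -- Lemma A: left multiplication by elements of Leib is zero
  have hA : ∀ z ∈ Leib, ∀ w, mul z w = 0 := by
    rw [hLeib]
    intro z hz
    induction hz using Submodule.span_induction with
    | mem x hx =>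
      obtain ⟨a, b, rfl⟩ := hx
      intro w
      have h1 := hleib a b w
      have h2 := hleib b a w
      have : mul (mul a b + mul b a) w = mul (mul a b) w + mul (mul b a) w := by
        simp [map_add, LinearMap.add_apply]
      rw [this]
      have e1 : mul (mul a b) w = mul a (mul b w) - mul b (mul a w) := by
        rw [h1]; abel
      have e2 : mul (mul b a) w = mul b (mul a w) - mul a (mul b w) := by
        rw [h2]; abel
      rw [e1, e2]; abel
    | zero => intro w; simp
    | add x y hx hy ihx ihy =>
      intro w
      simp [map_add, LinearMap.add_apply, ihx w, ihy w]
    | smul c x hx ihx =>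
      intro w
      simp [map_smul, LinearMap.smul_apply, ihx w]
  -- Lemma B: Leib is a right ideal for left multiplication: w • y ∈ Leib
  have hB : ∀ y ∈ Leib, ∀ w, mul w y ∈ Leib := by
    rw [hLeib]
    intro y hy
    induction hy using Submodule.span_induction with
    | mem x hx =>
      obtain ⟨a, b, rfl⟩ := hx
      intro w
      have : mul w (mul a b + mul b a) =
          (mul (mul w a) b + mul b (mul w a)) + (mul (mul w b) a + mul a (mul w b)) := by
        rw [map_add, hleib w a b, hleib w b a]; abel
      rw [this]
      exact Submodule.add_mem _
        (Submodule.subset_span ⟨mul w a, b, rfl⟩)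
        (Submodule.subset_span ⟨mul w b, a, by rw [add_comm]⟩)
    | zero => intro w; simp
    | add x y hx hy ihx ihy =>
      intro w; rw [map_add]; exact Submodule.add_mem _ (ihx w) (ihy w)
    | smul c x hx ihx =>
      intro w; rw [map_smul]; exact Submodule.smul_mem _ _ (ihx w)
  -- key computation: B(u•v, w) + B(v, u•w) = - B u (mul w v + mul v w)
  have hkey : ∀ u v w, B (mul u v) w + B v (mul u w) = - B u (mul w v + mul v w) := by
    intro u v w
    have h1 := hR u v w
    have h2 := hR u w v
    have : B v (mul u w) = B (mul u w) v := hsymm _ _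
    rw [this, map_add]
    linarith
  -- (i)
  have hi : (bilinPerp B Leib : Set V) =
      {u | ∀ v w, B (mul u v) w + B v (mul u w) = 0} := by
    ext u
    simp only [SetLike.mem_coe, mem_bilinPerp, Set.mem_setOf_eq]
    constructor
    · intro h v w
      rw [hkey u v w, h _ (by rw [hLeib]; exact Submodule.subset_span ⟨w, v, rfl⟩), neg_zero]
    · intro h x hx
      rw [hLeib] at hx
      induction hx using Submodule.span_induction with
      | mem x hx =>
        obtain ⟨a, b, rfl⟩ := hx
        have := hkey u b a
        rw [h b a] at this
        have := this.symm
        rw [neg_eq_zero] at this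
        simpa using this
      | zero => simp
      | add x y hx hy ihx ihy => simp [map_add, ihx, ihy]
      | smul c x hx ihx => simp [map_smul, ihx]
  refine ⟨hi, ⟨?_, ?_, ?_⟩, ?_⟩
  · -- Leib ≤ gg
    rw [hLeib, hgg]
    apply Submodule.span_le.mpr
    rintro x ⟨a, b, rfl⟩
    exact Submodule.add_mem _
      (Submodule.subset_span ⟨a, b, rfl⟩) (Submodule.subset_span ⟨b, a, rfl⟩)
  · -- gg ≤ perp
    rw [hgg]
    apply Submodule.span_le.mpr
    rintro x ⟨a, b, rfl⟩
    rw [SetLike.mem_coe, mem_bilinPerp]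
    intro z hz
    have h := hR a b z
    rw [hA z hz b, map_zero] at h
    linarith
  · -- Leib ≤ perp
    rw [hLeib]
    apply Submodule.span_le.mpr
    rintro x ⟨a, b, rfl⟩
    have : mul a b + mul b a ∈ gg := by
      rw [hgg]
      exact Submodule.add_mem _
        (Submodule.subset_span ⟨a, b, rfl⟩) (Submodule.subset_span ⟨b, a, rfl⟩)
    -- reuse gg ≤ perp argument
    rw [SetLike.mem_coe, mem_bilinPerp]
    intro z hz
    have h1 := hR a b z
    have h2 := hR b a z
    have hz' : z ∈ Leib := by rw [hLeib]; exact hz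
    rw [hA z hz' b, map_zero] at h1
    rw [hA z hz' a, map_zero] at h2
    simp [map_add, LinearMap.add_apply]
    linarith
  · -- (iii)
    intro x hx y hy
    apply hnd
    intro w
    have h := hR x y w
    have hwy : mul w y ∈ Leib := hB y hy w
    rw [mem_bilinPerp] at hx
    rw [hx _ hwy] at h
    linarith
end

section
/- Let (g,•) be a finite-dimensional real left Leibniz algebra equipped with a positive definite metric ⟨,⟩ that is R-invariant (⟨u•v,w⟩ + ⟨u,w•v⟩ = 0 for all u,v,w). Then g is a Lie algebra: u•v = −v•u for all u,v ∈ g. -/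
/-- A left Leibniz algebra with a positive definite (Euclidean)
R-invariant metric is a Lie algebra. -/
theorem euclidean_R_invariant_is_lie {V : Type*} [AddCommGroup V]
    [Module ℝ V] [FiniteDimensional ℝ V]
    (mul : V →ₗ[ℝ] V →ₗ[ℝ] V)
    (hleib : ∀ u v w, mul u (mul v w) = mul (mul u v) w + mul v (mul u w))
    (B : V →ₗ[ℝ] V →ₗ[ℝ] ℝ)
    (hsymm : ∀ u v, B u v = B v u)
    (hposdef : ∀ u, u ≠ 0 → 0 < B u u)
    (hR : ∀ u v w, B (mul u v) w + B u (mul w v) = 0) :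
    ∀ u v, mul u v = - mul v u := by
  -- squares are left-central
  have hsq : ∀ a w, mul (mul a a) w = 0 := by
    intro a w
    have h := hleib a a w
    have : mul (mul a a) w + mul a (mul a w) - mul a (mul a w) =
        mul a (mul a w) - mul a (mul a w) := by rw [← h]
    simpa using this
  intro u v
  set s := mul u v + mul v u with hs
  have hmuls : ∀ w, mul s w = 0 := by
    intro w
    have hexp : mul (u + v) (u + v) = mul u u + s + mul v v := by
      simp [hs, map_add]
      abel
    have h1 := hsq (u + v) w
    rw [hexp] at h1
    simp only [map_add, LinearMap.add_apply, hsq u w, hsq v w] at h1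
    simpa using h1
  -- B of any product against s vanishes
  have hprod : ∀ x y, B (mul x y) s = 0 := by
    intro x y
    have h := hR x y s
    rw [hmuls y] at h
    simpa using h
  have hBss : B s s = 0 := by
    have : B s s = B (mul u v) s + B (mul v u) s := by
      simp [hs, map_add]; ring
    rw [this, hprod u v, hprod v u, add_zero]
  have hs0 : s = 0 := by
    by_contra hne
    exact absurd hBss (ne_of_gt (hposdef s hne))
  have : mul u v + mul v u = 0 := hs0
  exact eq_neg_of_add_eq_zero_left this
end

section
/- Let (g,•) be a finite-dimensional real left Leibniz algebra with an L-invariant metric ⟨,⟩ such that Leib(g) is nondegenerate, i.e., Leib(g) ∩ Leib(g)^⊥ = {0}. Then: (i) g = Leib(g) ⊕ Leib(g)^⊥; (ii) Leib(g)^⊥ is closed under • and the restriction of • to Leib(g)^⊥ is anticommutative (u•v = −v•u for u,v ∈ Leib(g)^⊥) and satisfies the Jacobi identity; (iii) for every u ∈ Leib(g)^⊥, the map ρ(u) : a ↦ u•a maps Leib(g) into Leib(g) and is skew-symmetric with respect to ⟨,⟩ restricted to Leib(g); and (iv) ρ(u•v) = ρ(u)∘ρ(v) − ρ(v)∘ρ(u)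 on Leib(g) for all u,v ∈ Leib(g)^⊥. -/
/-- In a left Leibniz algebra with an L-invariant metric such
that `Leib(g)` is nondegenerate: (i) `g = Leib(g) ⊕ Leib(g)^⊥`;
(ii) `Leib(g)^⊥` is closed under `•`, is anticommutative and satisfies the
Jacobi identity; (iii) for `u ∈ Leib(g)^⊥`, `L_u` maps `Leib(g)` to itself and
is skew-symmetric on it; (iv) `ρ(u•v) = ρ(u)ρ(v) − ρ(v)ρ(u)` on `Leib(g)`. -/
theorem nondegenerate_leib_structure {V : Type*} [AddCommGroup V]
    [Module ℝ V] [FiniteDimensional ℝ V]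
    (mul : V →ₗ[ℝ] V →ₗ[ℝ] V)
    (hleib : ∀ u v w, mul u (mul v w) = mul (mul u v) w + mul v (mul u w))
    (B : V →ₗ[ℝ] V →ₗ[ℝ] ℝ)
    (hsymm : ∀ u v, B u v = B v u)
    (hnd : ∀ u, (∀ v, B u v = 0) → u = 0)
    (hL : ∀ u v w, B (mul u v) w + B v (mul u w) = 0)
    (Leib : Submodule ℝ V)
    (hLeib : Leib = Submodule.span ℝ {x | ∃ a b, x = mul a b + mul b a})
    (hnondeg : Leib ⊓ bilinPerp B Leib = ⊥) :
    (Leib ⊔ bilinPerp B Leib = ⊤) ∧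
    ((∀ u ∈ bilinPerp B Leib, ∀ v ∈ bilinPerp B Leib,
        mul u v ∈ bilinPerp B Leib) ∧
     (∀ u ∈ bilinPerp B Leib, ∀ v ∈ bilinPerp B Leib, mul u v = - mul v u) ∧
     (∀ u ∈ bilinPerp B Leib, ∀ v ∈ bilinPerp B Leib, ∀ w ∈ bilinPerp B Leib,
        mul (mul u v) w + mul (mul v w) u + mul (mul w u) v = 0)) ∧
    ((∀ u ∈ bilinPerp B Leib, ∀ a ∈ Leib, mul u a ∈ Leib) ∧
     (∀ u ∈ bilinPerp B Leib, ∀ a ∈ Leib, ∀ b ∈ Leib,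
        B (mul u a) b + B a (mul u b) = 0)) ∧
    (∀ u ∈ bilinPerp B Leib, ∀ v ∈ bilinPerp B Leib, ∀ a ∈ Leib,
        mul (mul u v) a = mul u (mul v a) - mul v (mul u a)) := by
  -- bilinPerp coincides with Mathlib's orthogonal
  have hperp : bilinPerp B Leib = LinearMap.BilinForm.orthogonal B Leib := by
    ext m
    constructor
    · intro hm n hn
      show B n m = 0
      rw [← hsymm]; exact hm n hn
    · intro hm x hx
      rw [hsymm]; exact hm x hx
  -- Leib is a left ideal
  have hideal : ∀ u : V, ∀ a ∈ Leib, mul u a ∈ Leib := by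
    intro u a ha
    rw [hLeib] at ha ⊢
    induction ha using Submodule.span_induction with
    | mem x hx =>
      obtain ⟨a, b, rfl⟩ := hx
      have : mul u (mul a b + mul b a) =
          (mul (mul u a) b + mul b (mul u a)) + (mul (mul u b) a + mul a (mul u b)) := by
        rw [map_add, hleib u a b, hleib u b a]; abel
      rw [this]
      exact Submodule.add_mem _
        (Submodule.subset_span ⟨mul u a, b, rfl⟩)
        (Submodule.subset_span ⟨mul u b, a, rfl⟩)
    | zero => simp
    | add x y _ _ hx hy => rw [map_add]; exact Submodule.add_mem _ hx hy
    | smul c x _ hx => rw [map_smul]; exact Submodule.smul_mem _ c hx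
  -- closure of perp under mul
  have hclosed : ∀ u ∈ bilinPerp B Leib, ∀ v ∈ bilinPerp B Leib,
      mul u v ∈ bilinPerp B Leib := by
    intro u hu v hv x hx
    have h1 := hL u v x
    have h2 : B v (mul u x) = 0 := hv _ (hideal u x hx)
    linarith
  -- anticommutativity
  have hanti : ∀ u ∈ bilinPerp B Leib, ∀ v ∈ bilinPerp B Leib,
      mul u v = - mul v u := by
    intro u hu v hv
    have hmem : mul u v + mul v u ∈ Leib ⊓ bilinPerp B Leib := by
      constructor
      · rw [hLeib]; exact Submodule.subset_span ⟨u, v, rfl⟩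
      · exact Submodule.add_mem _ (hclosed u hu v hv) (hclosed v hv u hu)
    rw [hnondeg, Submodule.mem_bot] at hmem
    linear_combination (norm := module) hmem
  refine ⟨?_, ⟨hclosed, hanti, ?_⟩, ⟨fun u _ a ha => hideal u a ha,
      fun u _ a _ b _ => hL u a b⟩, fun u _ v _ a _ => by
        rw [hleib u v a]; abel⟩
  · -- part (i)
    rw [hperp]
    have hdisj : Disjoint Leib (LinearMap.BilinForm.orthogonal B Leib) := by
      rw [disjoint_iff, ← hperp, hnondeg]
    have hrefl : LinearMap.BilinForm.IsRefl B := fun x y h => (hsymm x y) ▸ h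
    exact ((LinearMap.BilinForm.isCompl_orthogonal_iff_disjoint hrefl).mpr hdisj).sup_eq_top
  · -- Jacobi
    intro u hu v hv w hw
    have h1 := hleib u v w
    have h2 : mul (mul v w) u = -(mul (mul u v) w + mul v (mul u w)) := by
      rw [← h1]
      exact hanti _ (hclosed v hv w hw) u hu
    have h3 : mul (mul w u) v = mul v (mul u w) := by
      have ha : mul w u = - mul u w := hanti w hw u hu
      have hb : mul (mul w u) v = - mul v (mul w u) :=
        hanti _ (hclosed w hw u hu) v hv
      rw [hb, ha, map_neg, neg_neg]
    rw [h2, h3]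
    abel
end

section
/- Let (g,•) be a finite-dimensional real left Leibniz algebra with an R-invariant metric ⟨,⟩. If the linear span of {u•v : u,v ∈ g} equals g, then Leib(g) = {0}, i.e., u•v = −v•u for all u,v ∈ g, so (g,•,⟨,⟩) is a quadratic Lie algebra. In particular, every semi-simple R-quadratic left Leibniz algebra is a quadratic Lie algebra. -/
/-- A left Leibniz algebra with an R-invariant metric such that
`span {u•v} = g` has `Leib(g) = 0`, i.e. it is anticommutative, and the metric
is invariant, so `(g,•,⟨,⟩)` is a quadratic Lie algebra. -/
theorem R_invariant_perfect_is_quadratic_lie {V : Type*} [AddCommGroup V]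
    [Module ℝ V] [FiniteDimensional ℝ V]
    (mul : V →ₗ[ℝ] V →ₗ[ℝ] V)
    (hleib : ∀ u v w, mul u (mul v w) = mul (mul u v) w + mul v (mul u w))
    (B : V →ₗ[ℝ] V →ₗ[ℝ] ℝ)
    (hsymm : ∀ u v, B u v = B v u)
    (hnd : ∀ u, (∀ v, B u v = 0) → u = 0)
    (hR : ∀ u v w, B (mul u v) w + B u (mul w v) = 0)
    (hperfect : Submodule.span ℝ {x | ∃ u v, x = mul u v} = ⊤) :
    Submodule.span ℝ {x | ∃ u v, x = mul u v + mul v u} = ⊥ ∧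
    (∀ u v, mul u v = - mul v u) ∧
    (∀ u v w, B (mul u v) w = B u (mul v w)) := by
  -- Step 1: (u•v + v•u) • w = 0
  have hkey : ∀ u v w, mul (mul u v + mul v u) w = 0 := by
    intro u v w
    have h1 := hleib u v w
    have h2 := hleib v u w
    have : mul (mul u v) w + mul (mul v u) w = 0 := by
      have e1 : mul (mul u v) w = mul u (mul v w) - mul v (mul u w) :=
        eq_sub_of_add_eq h1.symm
      have e2 : mul (mul v u) w = mul v (mul u w) - mul u (mul v w) :=
        eq_sub_of_add_eq h2.symm
      rw [e1, e2]; abel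
    simpa [map_add, LinearMap.add_apply] using this
  -- Step 2: anticommutativity
  have hanti : ∀ u v, mul u v = - mul v u := by
    intro u v
    have hq : mul u v + mul v u = 0 := by
      apply hnd
      intro x
      have hx : x ∈ Submodule.span ℝ {x | ∃ u v, x = mul u v} := by
        rw [hperfect]; trivial
      induction hx using Submodule.span_induction with
      | mem y hy =>
          obtain ⟨a, b, rfl⟩ := hy
          have := hR a b (mul u v + mul v u)
          rw [hkey u v b] at this
          have h0 : B (mul u v + mul v u) (mul a b) = B (mul a b) (mul u v + mul v u) :=
            hsymm _ _
          simp only [map_zero] at this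
          rw [h0]; linarith
      | zero => simp
      | add y z _ _ hy hz => rw [map_add, hy, hz, add_zero]
      | smul c y _ hy => rw [map_smul, hy, smul_zero]
    exact eq_neg_of_add_eq_zero_left hq
  constructor
  · rw [Submodule.span_eq_bot]
    rintro x ⟨u, v, rfl⟩
    simp [hanti u v]
  refine ⟨hanti, fun u v w => ?_⟩
  have := hR u v w
  rw [hanti w v] at this
  simp only [map_neg] at this
  linarith
end

section
/- Let (g,•) be a finite-dimensional real left Leibniz algebra with an L-invariant metric ⟨,⟩. If dim Leib(g) ≤ 1, then g is a Lie algebra, i.e., u•v = −v•u for all u,v ∈ g. Equivalently, an L-quadratic left Leibniz algebra that is not a Lie algebra satisfies dim Leib(g) ≥ 2. -/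
/-- A left Leibniz algebra with an L-invariant metric and
`dim Leib(g) ≤ 1` is a Lie algebra. Equivalently, an L-quadratic left Leibniz
algebra that is not a Lie algebra has `dim Leib(g) ≥ 2`. -/
theorem L_quadratic_dim_leib_le_one_is_lie {V : Type*} [AddCommGroup V]
    [Module ℝ V] [FiniteDimensional ℝ V]
    (mul : V →ₗ[ℝ] V →ₗ[ℝ] V)
    (hleib : ∀ u v w, mul u (mul v w) = mul (mul u v) w + mul v (mul u w))
    (B : V →ₗ[ℝ] V →ₗ[ℝ] ℝ)
    (hsymm : ∀ u v, B u v = B v u)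
    (hnd : ∀ u, (∀ v, B u v = 0) → u = 0)
    (hL : ∀ u v w, B (mul u v) w + B v (mul u w) = 0)
    (hdim : Module.finrank ℝ
      (Submodule.span ℝ {x | ∃ a b, x = mul a b + mul b a}) ≤ 1) :
    ∀ u v, mul u v = - mul v u := by
  set N := Submodule.span ℝ {x | ∃ a b, x = mul a b + mul b a} with hNdef
  have hmem : ∀ a b : V, mul a b + mul b a ∈ N := fun a b =>
    Submodule.subset_span ⟨a, b, rfl⟩
  -- extract a spanning vector for N
  obtain ⟨z, hz⟩ : ∃ z : V, ∀ x ∈ N, ∃ c : ℝ, x = c • z := by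
    obtain ⟨⟨z, hzN⟩, hz⟩ := (finrank_le_one_iff).mp hdim
    refine ⟨z, fun x hx => ?_⟩
    obtain ⟨c, hc⟩ := hz ⟨x, hx⟩
    exact ⟨c, by simpa using congrArg Subtype.val hc.symm⟩
  -- cyclic identity (R3)
  have hT : ∀ a b c : V,
      B (mul a b + mul b a) c + B (mul b c + mul c b) a
        + B (mul c a + mul a c) b = 0 := by
    intro a b c
    simp only [map_add, LinearMap.add_apply]
    linarith [hL a b c, hL b a c, hL b c a, hL c b a, hL c a b, hL a c b,
      hsymm b (mul a c), hsymm a (mul b c), hsymm c (mul b a),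
      hsymm b (mul c a), hsymm a (mul c b), hsymm c (mul a b)]
  -- main claim: all symmetrized products vanish
  have hS : ∀ u v : V, mul u v + mul v u = 0 := by
    by_cases hα : ∀ w, B z w = 0
    · -- then z = 0, so N consists only of 0
      have hz0 : z = 0 := hnd z hα
      intro u v
      obtain ⟨c, hc⟩ := hz _ (hmem u v)
      rw [hz0, smul_zero] at hc
      exact hc
    · push_neg at hα
      obtain ⟨w₀, hw₀⟩ := hα
      set w' : V := (B z w₀)⁻¹ • w₀ with hw'def
      have hw1 : B z w' = 1 := by
        simp [hw'def, inv_mul_cancel₀ hw₀]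
      -- the coefficient function
      have hBS : ∀ a b w : V,
          B (mul a b + mul b a) w = (B (mul a b + mul b a) w') * B z w := by
        intro a b w
        obtain ⟨c, hc⟩ := hz _ (hmem a b)
        rw [hc]
        simp only [map_smul, LinearMap.smul_apply, smul_eq_mul, hw1, mul_one]
      set φ : V → V → ℝ := fun a b => B (mul a b + mul b a) w' with hφdef
      have hφsymm : ∀ a b, φ a b = φ b a := by
        intro a b; simp only [hφdef]; rw [add_comm]
      have hTφ : ∀ a b c : V,
          φ a b * B z c + φ b c * B z a + φ c a * B z b = 0 := by
        intro a b c
        have := hT a b c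
        rw [hBS a b c, hBS b c a, hBS c a b] at this
        exact this
      have h1 : φ w' w' = 0 := by
        have := hTφ w' w' w'
        rw [hw1] at this
        linarith
      have h2 : ∀ u, φ u w' = 0 := by
        intro u
        have := hTφ u w' w'
        rw [hw1, h1, hφsymm w' u] at this
        linarith
      have h3 : ∀ u v, φ u v = 0 := by
        intro u v
        have := hTφ u v w'
        rw [hw1, h2 v, hφsymm w' u, h2 u] at this
        linarith
      intro u v
      obtain ⟨c, hc⟩ := hz _ (hmem u v)
      have hcφ : c = φ u v := by
        simp only [hφdef, hc, map_smul, LinearMap.smul_apply, smul_eq_mul, hw1, mul_one]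
      rw [hc, hcφ, h3, zero_smul]
  intro u v
  have := hS u v
  exact eq_neg_of_add_eq_zero_left this
end

section
/- Let (g,•) be a finite-dimensional real left Leibniz algebra with an R-invariant metric ⟨,⟩. If dim Leib(g) ≤ 1, then g is a Lie algebra, i.e., u•v = −v•u for all u,v ∈ g. In particular, if every totally isotropic subspace of (g,⟨,⟩) has dimension at most 1 (for instance, if the metric is Lorentzian), then g is a Lie algebra. -/
/-- A left Leibniz algebra with an R-invariant metric and
`dim Leib(g) ≤ 1` is a Lie algebra. In particular, if every totally isotropic
subspace of `(g,⟨,⟩)` has dimension at most 1 (e.g. the metric is Lorentzian),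
then `g` is a Lie algebra. -/
theorem R_quadratic_dim_leib_le_one_is_lie {V : Type*} [AddCommGroup V]
    [Module ℝ V] [FiniteDimensional ℝ V]
    (mul : V →ₗ[ℝ] V →ₗ[ℝ] V)
    (hleib : ∀ u v w, mul u (mul v w) = mul (mul u v) w + mul v (mul u w))
    (B : V →ₗ[ℝ] V →ₗ[ℝ] ℝ)
    (hsymm : ∀ u v, B u v = B v u)
    (hnd : ∀ u, (∀ v, B u v = 0) → u = 0)
    (hR : ∀ u v w, B (mul u v) w + B u (mul w v) = 0) :
    ((Module.finrank ℝ
        (Submodule.span ℝ {x | ∃ a b, x = mul a b + mul b a}) ≤ 1) →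
      ∀ u v, mul u v = - mul v u) ∧
    ((∀ W : Submodule ℝ V, (∀ x ∈ W, ∀ y ∈ W, B x y = 0) →
        Module.finrank ℝ W ≤ 1) →
      ∀ u v, mul u v = - mul v u) := by
  set S : Set V := {x | ∃ a b, x = mul a b + mul b a} with hS
  set W : Submodule ℝ V := Submodule.span ℝ S with hW
  have hBu : ∀ u w : V, B (mul u w) u = 0 := by
    intro u w
    have h := hR u w u
    rw [hsymm u (mul u w)] at h
    linarith
  have hgen : ∀ a b : V, mul a b + mul b a ∈ W := fun a b =>
    Submodule.subset_span ⟨a, b, rfl⟩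
  -- Part 1
  have main : Module.finrank ℝ W ≤ 1 → ∀ u v, mul u v = - mul v u := by
    intro h1
    obtain ⟨s, hsW⟩ := (Submodule.finrank_le_one_iff_isPrincipal W).mp h1
    have hmem : ∀ x ∈ W, ∃ c : ℝ, x = c • s := by
      intro x hx
      rw [hsW] at hx
      obtain ⟨c, hc⟩ := Submodule.mem_span_singleton.mp hx
      exact ⟨c, hc.symm⟩
    have hsq : ∀ u : V, mul u u = 0 := by
      intro u
      obtain ⟨α, hα⟩ := hmem (mul u u + mul u u) (hgen u u)
      have h2 : (2 : ℝ) • mul u u = α • s := by rw [two_smul]; exact hα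
      by_cases hs0 : s = 0
      · have h3 : (2 : ℝ) • mul u u = 0 := by rw [h2, hs0, smul_zero]
        simpa using smul_eq_zero.mp h3
      · have key : ∀ (w : V) (c : ℝ), mul u w + mul w u = c • s →
            α * B s w + 2 * (c * B u s) = 0 := by
          intro w c hc
          have h0 := hR u u w
          have e1 : (2 : ℝ) * B (mul u u) w = α * B s w := by
            have := congrArg (fun x => B x w) h2
            simpa [smul_eq_mul] using this
          have e2 : mul w u = c • s - mul u w := by rw [← hc]; abel
          have e3 : B u (mul w u) = c * B u s := by
            rw [e2, map_sub, map_smul, smul_eq_mul, hsymm u (mul u w), hBu u w]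
            ring
          rw [e3] at h0
          linarith
        have hc0 : α * B s u = 0 := by
          have hk := key u α hα
          rw [hsymm u s] at hk
          linarith
        have hα0 : α = 0 := by
          by_cases hbs : B s u = 0
          · obtain ⟨w0, hw0⟩ : ∃ w0, B s w0 ≠ 0 := by
              by_contra hall
              push_neg at hall
              exact hs0 (hnd s hall)
            obtain ⟨c, hcw⟩ := hmem (mul u w0 + mul w0 u) (hgen u w0)
            have hk := key w0 c hcw
            have hbus : B u s = B s u := hsymm u s
            rw [hbus, hbs] at hk
            have hz : α * B s w0 = 0 := by linarith
            exact (mul_eq_zero.mp hz).resolve_right hw0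
          · exact (mul_eq_zero.mp hc0).resolve_right hbs
        have h3 : (2 : ℝ) • mul u u = 0 := by rw [h2, hα0, zero_smul]
        simpa using smul_eq_zero.mp h3
    intro u v
    have h6 : mul (u + v) (u + v) = 0 := hsq (u + v)
    have h7 : mul u u + mul u v + (mul v u + mul v v) = 0 := by
      rw [← h6]
      simp only [map_add, LinearMap.add_apply]
      abel
    rw [hsq u, hsq v] at h7
    have h8 : mul u v + mul v u = 0 := by simpa using h7
    exact eq_neg_of_add_eq_zero_left h8
  -- Part 2: Leib is totally isotropic
  have hLzero : ∀ x ∈ W, ∀ v, mul x v = 0 := by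
    intro x hx v
    have hsub : W ≤ LinearMap.ker (mul.flip v) := by
      rw [hW, Submodule.span_le]
      rintro y ⟨a, b, rfl⟩
      have hl1 := hleib a b v
      have hl2 := hleib b a v
      have hz : mul (mul a b + mul b a) v = 0 := by
        rw [map_add, LinearMap.add_apply]
        have e1 : mul (mul a b) v = mul a (mul b v) - mul b (mul a v) := by
          rw [hl1]; abel
        have e2 : mul (mul b a) v = mul b (mul a v) - mul a (mul b v) := by
          rw [hl2]; abel
        rw [e1, e2]; abel
      simpa [LinearMap.mem_ker, LinearMap.flip_apply] using hz
    have hx' := hsub hx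
    simpa [LinearMap.mem_ker, LinearMap.flip_apply] using hx'
  have hiso : ∀ x ∈ W, ∀ y ∈ W, B x y = 0 := by
    intro x hx y hy
    have hsub : W ≤ LinearMap.ker (B x) := by
      rw [hW, Submodule.span_le]
      rintro z ⟨a, b, rfl⟩
      simp only [SetLike.mem_coe, LinearMap.mem_ker]
      have e1 : B x (mul a b) = 0 := by
        have h := hR a b x
        rw [hLzero x hx b, map_zero] at h
        rw [hsymm]; linarith
      have e2 : B x (mul b a) = 0 := by
        have h := hR b a x
        rw [hLzero x hx a, map_zero] at h
        rw [hsymm]; linarith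
      rw [map_add, e1, e2, add_zero]
    exact LinearMap.mem_ker.mp (hsub hy)
  exact ⟨main, fun h2 => main (h2 W hiso)⟩
end
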